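/- Let q be an odd prime with q ≡ 1 (mod 8) or q ≡ −1 (mod 8). Then P̃_{(q−1)/2}² ≡ 2 + 2·(−1)^{(q−1)/2} (mod q²), where P̃_n is the n-th Pell-Lucas number. -/
import Mathlib


/-- The Pell-Lucas numbers: `P̃_0 = 2`, `P̃_1 = 2`, `P̃_i = 2 * P̃_{i-1} + P̃_{i-2}`. -/
def pellLucas : ℕ → ℤ
  | 0 => 2
  | 1 => 2
  | n + 2 => 2 * pellLucas (n + 1) + pellLucas n

/-- Auxiliary: the Pell numbers. -/
def pellAux : ℕ → ℤ
  | 0 => 0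
  | 1 => 1
  | n + 2 => 2 * pellAux (n + 1) + pellAux n

lemma pellLucas_eq_pellAux (n : ℕ) :
    pellLucas n = 2 * pellAux (n + 1) - 2 * pellAux n := by
  induction n using Nat.twoStepInduction with
  | zero => simp [pellLucas, pellAux]
  | one => simp [pellLucas, pellAux]
  | more n ih1 ih2 =>
    show 2 * pellLucas (n+1) + pellLucas n = 2 * pellAux (n + 3) - 2 * pellAux (n+2)
    have h3 : pellAux (n + 3) = 2 * pellAux (n + 2) + pellAux (n + 1) := rfl
    have h2 : pellAux (n + 2) = 2 * pellAux (n + 1) + pellAux n := rfl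
    rw [ih1, ih2, h3, h2]; ring

lemma pellAux_cassini (n : ℕ) :
    pellAux (n + 1) ^ 2 - 2 * pellAux (n + 1) * pellAux n - pellAux n ^ 2
      = (-1) ^ n := by
  induction n with
  | zero => simp [pellAux]
  | succ n ih =>
    have h2 : pellAux (n + 2) = 2 * pellAux (n + 1) + pellAux n := rfl
    rw [h2, pow_succ]
    linear_combination (-1 : ℤ) * ih

/-- Key identity: `Q_n ^ 2 = 8 * P_n ^ 2 + 4 * (-1)^n`. -/
lemma pellLucas_sq (n : ℕ) :
    pellLucas n ^ 2 = 8 * pellAux n ^ 2 + 4 * (-1) ^ n := by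
  rw [pellLucas_eq_pellAux]
  linear_combination (4 : ℤ) * pellAux_cassini n

section ModP

variable {p : ℕ} [Fact p.Prime] (s : ZMod p) (hs : s ^ 2 = 2)

lemma pellLucas_closed (hs : s ^ 2 = 2) :
    ∀ n : ℕ, ((pellLucas n : ℤ) : ZMod p) = (1 + s) ^ n + (1 - s) ^ n := by
  intro n
  induction n using Nat.twoStepInduction with
  | zero => norm_num [pellLucas]
  | one => simp [pellLucas]; ring
  | more n ih1 ih2 =>
    show ((2 * pellLucas (n+1) + pellLucas n : ℤ) : ZMod p) = _
    push_cast
    rw [ih1, ih2]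
    linear_combination (-(1 + s) ^ n - (1 - s) ^ n) * hs

lemma pellAux_closed (hs : s ^ 2 = 2) :
    ∀ n : ℕ, (2 * s) * ((pellAux n : ℤ) : ZMod p) = (1 + s) ^ n - (1 - s) ^ n := by
  intro n
  induction n using Nat.twoStepInduction with
  | zero => simp [pellAux]
  | one => simp [pellAux]; ring
  | more n ih1 ih2 =>
    show (2 * s) * ((2 * pellAux (n+1) + pellAux n : ℤ) : ZMod p) = _
    push_cast
    rw [mul_add, mul_left_comm, ih1, ih2]
    linear_combination ((1 - s) ^ n - (1 + s) ^ n) * hs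

end ModP

/-- **(24).** If `q` is an odd prime with `q ≡ ±1 (mod 8)`, then
`P̃_{(q-1)/2}² ≡ 2 + 2·(-1)^{(q-1)/2} (mod q²)`. -/
theorem pellLucas_half_sq_congr (q : ℕ) (hq : q.Prime) (hodd : Odd q)
    (h8 : (q : ℤ) ≡ 1 [ZMOD 8] ∨ (q : ℤ) ≡ -1 [ZMOD 8]) :
    pellLucas ((q - 1) / 2) ^ 2 ≡ 2 + 2 * (-1 : ℤ) ^ ((q - 1) / 2)
      [ZMOD (q : ℤ) ^ 2] := by
  haveI : Fact q.Prime := ⟨hq⟩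
  have hq2 : q ≠ 2 := by rintro rfl; exact (Nat.not_odd_iff_even.mpr (by norm_num)) hodd
  -- q % 8 = 1 or 7
  have h8' : q % 8 = 1 ∨ q % 8 = 7 := by
    rcases h8 with h | h
    · left
      have := Int.ModEq.dvd h
      omega
    · right
      have := Int.ModEq.dvd h
      have hq1 : 1 < q := hq.one_lt
      omega
  -- square root of 2 mod q
  obtain ⟨s, hs⟩ : IsSquare (2 : ZMod q) := by
    rw [ZMod.exists_sq_eq_two_iff hq2]; exact h8'
  have hs2 : s ^ 2 = 2 := by rw [sq]; exact hs.symm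
  set m := (q - 1) / 2 with hm
  have hq1 : 1 < q := hq.one_lt
  have hqodd : q % 2 = 1 := Nat.odd_iff.mp hodd
  have h2m : 2 * m = q - 1 := by omega
  -- basic facts in ZMod q
  have hq_ndvd : ¬ q ∣ 2 := fun h => by have := Nat.le_of_dvd two_pos h; omega
  have hchar : (2 : ZMod q) ≠ 0 := by
    intro h
    exact hq_ndvd ((ZMod.natCast_eq_zero_iff 2 q).mp (by exact_mod_cast h))
  have hαβ : (1 + s) * (1 - s) = -1 := by linear_combination -hs2
  have hneg1 : (-1 : ZMod q) ≠ 0 := by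
    simp only [ne_eq, neg_eq_zero]; exact one_ne_zero
  have hα : (1 + s) ≠ 0 := fun h => hneg1 (by rw [← hαβ, h, zero_mul])
  have hβ : (1 - s) ≠ 0 := fun h => hneg1 (by rw [← hαβ, h, mul_zero])
  have hfermat : (1 + s) ^ (q - 1) = 1 := ZMod.pow_card_sub_one_eq_one hα
  have hβ_eq : (1 - s) = -(1 + s)⁻¹ := by
    have h1 : (1 + s) * (-(1 - s)) = 1 := by linear_combination hs2
    rw [inv_eq_of_mul_eq_one_right h1, neg_neg]
  -- key: α^m * α^m = 1
  have hαm : (1 + s) ^ m * (1 + s) ^ m = 1 := by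
    rw [← pow_add, ← two_mul, h2m, hfermat]
  have hαm_inv : ((1 + s) ^ m)⁻¹ = (1 + s) ^ m := by
    exact inv_eq_of_mul_eq_one_right hαm
  have hβm : (1 - s) ^ m = (-1) ^ m * (1 + s) ^ m := by
    rw [hβ_eq, neg_pow, inv_pow, hαm_inv]
  rcases h8' with h81 | h87
  · -- q ≡ 1 mod 8 : m even, q ∣ pellAux m
    have hmeven : m % 2 = 0 := by omega
    have hme : (-1 : ZMod q) ^ m = 1 := by
      rw [← Nat.div_add_mod m 2, hmeven, Nat.add_zero, pow_mul]; norm_num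
    have hpell0 : ((pellAux m : ℤ) : ZMod q) = 0 := by
      have := pellAux_closed s hs2 m
      rw [hβm, hme, one_mul, sub_self] at this
      have hs0 : (2 * s : ZMod q) ≠ 0 := by
        intro h
        have h4 : ((2 * s) * (2 * s) : ZMod q) = 0 := by rw [h, zero_mul]
        have h4' : ((2 * s) * (2 * s) : ZMod q) = 2 * 2 * 2 := by
          linear_combination (4 : ZMod q) * hs2
        have : (2 : ZMod q) * (2 * 2) = 0 := by rw [← mul_assoc, ← h4', h4]
        rcases mul_eq_zero.mp this with h' | h'
        · exact hchar h'
        · exact hchar (mul_self_eq_zero.mp h')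
      exact (mul_eq_zero.mp this).resolve_left hs0
    have hdvd : (q : ℤ) ∣ pellAux m := (ZMod.intCast_zmod_eq_zero_iff_dvd _ _).mp hpell0
    have hdvd2 : (q : ℤ) ^ 2 ∣ pellAux m ^ 2 := pow_dvd_pow_of_dvd hdvd 2
    have hme' : (-1 : ℤ) ^ m = 1 := by
      rw [← Nat.div_add_mod m 2, hmeven, Nat.add_zero, pow_mul]; norm_num
    rw [pellLucas_sq, hme']
    refine Int.ModEq.symm (Int.modEq_iff_dvd.mpr ?_)
    have heq : (8 * pellAux m ^ 2 + 4 * 1 : ℤ) - (2 + 2 * 1) = 8 * pellAux m ^ 2 := by ring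
    rw [heq]
    exact hdvd2.mul_left 8
  · -- q ≡ 7 mod 8 : m odd, q ∣ pellLucas m
    have hmodd : m % 2 = 1 := by omega
    have hme : (-1 : ZMod q) ^ m = -1 := by
      rw [← Nat.div_add_mod m 2, hmodd, pow_add, pow_mul]; norm_num
    have hpl0 : ((pellLucas m : ℤ) : ZMod q) = 0 := by
      have := pellLucas_closed s hs2 m
      rw [hβm, hme, neg_one_mul, add_neg_cancel] at this
      exact this
    have hdvd : (q : ℤ) ∣ pellLucas m := (ZMod.intCast_zmod_eq_zero_iff_dvd _ _).mp hpl0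
    have hdvd2 : (q : ℤ) ^ 2 ∣ pellLucas m ^ 2 := pow_dvd_pow_of_dvd hdvd 2
    have hme' : (-1 : ℤ) ^ m = -1 := by
      rw [← Nat.div_add_mod m 2, hmodd, pow_add, pow_mul]; norm_num
    rw [hme']
    have : (2 + 2 * (-1) : ℤ) = 0 := by ring
    rw [this]
    exact (Int.modEq_zero_iff_dvd).mpr hdvd2
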